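/- arXiv:1406.7223 — 3 statements merged into one kernel-verified Lean document; each statement's English description precedes it below -/
import Mathlib

section
/- Let f : ℝ → ℝ be continuous and nondecreasing, and let u ∈ C²(ℝⁿ) satisfy ℐu(x) = f(u(x)) for every x ∈ ℝⁿ. If u(x) ≤ K(1 + |x|^κ) for all x ∈ ℝⁿ, for some K ≥ 0 and κ ∈ [0, 2s), then ℐu(x) ≤ 0 for every x ∈ ℝⁿ. -/
open MeasureTheory
open scoped RealInnerProductSpace

/-- The anisotropic integro-differential operator
`ℐu(x) = ∫_{S^{n-1} × ℝ} (u(x + rϑ) + u(x − rϑ) − 2u(x)) dμ(ϑ) dr / |r|^{1+2s}`. -/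
noncomputable def opI (n : ℕ) (s : ℝ)
    (μ : Measure (Metric.sphere (0 : EuclideanSpace ℝ (Fin n)) 1))
    (u : EuclideanSpace ℝ (Fin n) → ℝ) (x : EuclideanSpace ℝ (Fin n)) : ℝ :=
  ∫ p : Metric.sphere (0 : EuclideanSpace ℝ (Fin n)) 1 × ℝ,
    (u (x + p.2 • (p.1 : EuclideanSpace ℝ (Fin n))) +
      u (x - p.2 • (p.1 : EuclideanSpace ℝ (Fin n))) - 2 * u x) / |p.2| ^ (1 + 2 * s)
    ∂(μ.prod volume)

/-!
Fix `q` with `max (κ/2) 0 < q < s` and the barrier `⟨x⟩^{2q} = (1 + ‖x‖²)^q`. Since `u` grows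
slower than `‖x‖^{2q}`, for every `ε > 0` the function `u - ε⟨·⟩^{2q}` attains a global maximum
at some `z`. There the second differences of `u` are dominated by those of `ε⟨·⟩^{2q}`, which are
`O(min(r², |r|^{2q}))` and hence integrable against `dr / |r|^{1+2s}`; so `ℐu(z) ≤ ε M` with `M`
independent of `ε`. Monotonicity of `f` gives
`f(u(x) - ε⟨x⟩^{2q}) ≤ f(u(z)) = ℐu(z) ≤ ε M`, and letting `ε → 0` yields `ℐu(x) = f(u(x)) ≤ 0`.
-/

open Filter Set Topology

lemma Real.rpow_le_add_mul_rpow_sub_one_mul_sub {q a b : ℝ} (hq₀ : 0 ≤ q) (hq₁ : q ≤ 1)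
    (ha : 0 < a) (hb : 0 ≤ b) : b ^ q ≤ a ^ q + q * a ^ (q - 1) * (b - a) := by
  have hbern : (1 + (b / a - 1)) ^ q ≤ 1 + q * (b / a - 1) :=
    rpow_one_add_le_one_add_mul_self (by linarith [div_nonneg hb ha.le]) hq₀ hq₁
  rw [add_sub_cancel, Real.div_rpow hb ha.le, div_le_iff₀ (by positivity)] at hbern
  calc b ^ q ≤ (1 + q * (b / a - 1)) * a ^ q := hbern
    _ = a ^ q + q * a ^ (q - 1) * (b - a) := by
      rw [Real.rpow_sub_one ha.ne']; field_simp

lemma integral_mono_of_integral_nonneg {α : Type*} [MeasurableSpace α] {μ : Measure α}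
    {F Φ : α → ℝ} (hΦ : Integrable Φ μ) (hΦ₀ : 0 ≤ ∫ x, Φ x ∂μ) (hle : ∀ x, F x ≤ Φ x) :
    ∫ x, F x ∂μ ≤ ∫ x, Φ x ∂μ := by
  by_cases hF : Integrable F μ
  · exact integral_mono hF hΦ hle
  · rwa [integral_undef hF]

section Barrier

variable {E : Type*} [NormedAddCommGroup E]

noncomputable def barrier (q : ℝ) (x : E) : ℝ := (1 + ‖x‖ ^ 2) ^ q

lemma barrier_nonneg (q : ℝ) (x : E) : 0 ≤ barrier q x := by
  unfold barrier; positivity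

lemma continuous_barrier {q : ℝ} (hq : 0 ≤ q) : Continuous (barrier q : E → ℝ) :=
  (continuous_const.add (continuous_norm.pow 2)).rpow_const fun _ ↦ Or.inr hq

lemma rpow_le_barrier {q : ℝ} (hq : 0 ≤ q) (x : E) : ‖x‖ ^ (2 * q) ≤ barrier q x := by
  rw [Real.rpow_mul (norm_nonneg x), Real.rpow_two]
  exact Real.rpow_le_rpow (by positivity) (by linarith) hq

variable [InnerProductSpace ℝ E]

lemma barrier_secondDiff_le_mul_sq {q : ℝ} (hq₀ : 0 ≤ q) (hq₁ : q ≤ 1) (z h : E) :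
    barrier q (z + h) + barrier q (z - h) - 2 * barrier q z
      ≤ 2 * q * (1 + ‖z‖ ^ 2) ^ (q - 1) * ‖h‖ ^ 2 := by
  have ha : 0 < 1 + ‖z‖ ^ 2 := by positivity
  have hplus := Real.rpow_le_add_mul_rpow_sub_one_mul_sub hq₀ hq₁ ha
    (by positivity : 0 ≤ 1 + ‖z + h‖ ^ 2)
  have hminus := Real.rpow_le_add_mul_rpow_sub_one_mul_sub hq₀ hq₁ ha
    (by positivity : 0 ≤ 1 + ‖z - h‖ ^ 2)
  have hpar : (1 + ‖z + h‖ ^ 2 - (1 + ‖z‖ ^ 2)) + (1 + ‖z - h‖ ^ 2 - (1 + ‖z‖ ^ 2))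
      = 2 * ‖h‖ ^ 2 := by
    rw [norm_add_sq_real, norm_sub_sq_real]; ring
  unfold barrier
  linear_combination hplus + hminus + q * (1 + ‖z‖ ^ 2) ^ (q - 1) * hpar

lemma barrier_secondDiff_le_min {q : ℝ} (hq₀ : 0 < q) (hq₁ : q ≤ 1) (z h : E) :
    barrier q (z + h) + barrier q (z - h) - 2 * barrier q z
      ≤ min (2 * ‖h‖ ^ 2) (8 * ‖h‖ ^ (2 * q)) := by
  have hquad := barrier_secondDiff_le_mul_sq hq₀.le hq₁ z h
  have ha : 1 ≤ 1 + ‖z‖ ^ 2 := by linarith [sq_nonneg ‖z‖]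
  have hpow_le_one : (1 + ‖z‖ ^ 2) ^ (q - 1) ≤ 1 :=
    Real.rpow_le_one_of_one_le_of_nonpos ha (by linarith)
  have hh : ‖h‖ ^ (2 * q) = (‖h‖ ^ 2) ^ q := by
    rw [Real.rpow_mul (norm_nonneg h), Real.rpow_two]
  refine le_min ?_ ?_
  · refine hquad.trans ?_
    have : q * (1 + ‖z‖ ^ 2) ^ (q - 1) ≤ 1 := mul_le_one₀ hq₁ (by positivity) hpow_le_one
    linarith [mul_le_mul_of_nonneg_right this (sq_nonneg ‖h‖)]
  rcases eq_or_ne h 0 with rfl | hne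
  · simp only [add_zero, sub_zero, norm_zero]
    linarith [Real.rpow_nonneg (le_refl (0 : ℝ)) (2 * q)]
  have hpos : 0 < ‖h‖ ^ 2 := by positivity
  rcases le_or_gt (‖h‖ ^ 2) (1 + ‖z‖ ^ 2) with hsmall | hlarge
  · -- the quadratic bound, with `1 + ‖z‖²` traded for the smaller `‖h‖²`
    have hmono : (1 + ‖z‖ ^ 2) ^ (q - 1) ≤ (‖h‖ ^ 2) ^ (q - 1) :=
      Real.rpow_le_rpow_of_nonpos hpos hsmall (by linarith)
    have hcollapse : (‖h‖ ^ 2) ^ (q - 1) * ‖h‖ ^ 2 = ‖h‖ ^ (2 * q) := by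
      rw [hh, Real.rpow_sub_one hpos.ne']; field_simp
    calc _ ≤ 2 * q * (1 + ‖z‖ ^ 2) ^ (q - 1) * ‖h‖ ^ 2 := hquad
      _ ≤ 2 * q * (‖h‖ ^ 2) ^ (q - 1) * ‖h‖ ^ 2 := by gcongr
      _ = 2 * q * ‖h‖ ^ (2 * q) := by rw [mul_assoc, hcollapse]
      _ ≤ 8 * ‖h‖ ^ (2 * q) := by gcongr; linarith
  · -- each of `z ± h` has norm at most `2‖h‖`
    have hfar : ∀ w : E, ‖w‖ ≤ ‖z‖ + ‖h‖ → barrier q w ≤ 4 * ‖h‖ ^ (2 * q) := by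
      intro w hw
      have hw2 : 1 + ‖w‖ ^ 2 ≤ 4 * ‖h‖ ^ 2 := by
        nlinarith [sq_nonneg (‖z‖ - ‖h‖), norm_nonneg w, norm_nonneg z]
      calc barrier q w ≤ (4 * ‖h‖ ^ 2) ^ q := Real.rpow_le_rpow (by positivity) hw2 hq₀.le
        _ = 4 ^ q * ‖h‖ ^ (2 * q) := by rw [Real.mul_rpow (by norm_num) hpos.le, hh]
        _ ≤ 4 * ‖h‖ ^ (2 * q) := by
          gcongr
          exact Real.rpow_le_self_of_one_le (by norm_num) hq₁
    linarith [hfar _ (norm_add_le z h), hfar _ (norm_sub_le z h), barrier_nonneg q z]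

end Barrier

noncomputable def barrierProfile (q s t : ℝ) : ℝ :=
  min (2 * t ^ 2) (8 * t ^ (2 * q)) / t ^ (1 + 2 * s)

lemma barrierProfile_nonneg (q s : ℝ) {t : ℝ} (ht : 0 ≤ t) : 0 ≤ barrierProfile q s t :=
  div_nonneg (le_min (by positivity) (by positivity)) (by positivity)

lemma barrierProfile_le_near_zero (q s : ℝ) {t : ℝ} (ht : 0 < t) :
    barrierProfile q s t ≤ 2 * t ^ (1 - 2 * s) := by
  calc barrierProfile q s t ≤ 2 * t ^ 2 / t ^ (1 + 2 * s) := by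
        unfold barrierProfile; gcongr; exact min_le_left _ _
    _ = 2 * t ^ (1 - 2 * s) := by
      rw [mul_div_assoc, ← Real.rpow_two, ← Real.rpow_sub ht]; ring_nf

lemma barrierProfile_le_near_infty (q s : ℝ) {t : ℝ} (ht : 0 < t) :
    barrierProfile q s t ≤ 8 * t ^ (2 * q - (1 + 2 * s)) := by
  calc barrierProfile q s t ≤ 8 * t ^ (2 * q) / t ^ (1 + 2 * s) := by
        unfold barrierProfile; gcongr; exact min_le_right _ _
    _ = 8 * t ^ (2 * q - (1 + 2 * s)) := by rw [mul_div_assoc, ← Real.rpow_sub ht]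

lemma integrableOn_barrierProfile_Ioi {q s : ℝ} (hqs : q < s) (hs : s < 1) :
    IntegrableOn (barrierProfile q s) (Ioi 0) := by
  have hmeas : Measurable (barrierProfile q s) := by unfold barrierProfile; fun_prop
  have hdominated : ∀ {g : ℝ → ℝ} {S : Set ℝ}, MeasurableSet S → S ⊆ Ioi 0 → IntegrableOn g S →
      (∀ t ∈ S, barrierProfile q s t ≤ g t) → IntegrableOn (barrierProfile q s) S := by
    intro g S hS hS0 hg hle
    refine hg.mono' hmeas.aestronglyMeasurable (ae_restrict_of_forall_mem hS fun t ht ↦ ?_)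
    rw [Real.norm_of_nonneg (barrierProfile_nonneg q s (le_of_lt (hS0 ht)))]
    exact hle t ht
  rw [← Ioc_union_Ioi_eq_Ioi zero_le_one]
  refine (hdominated measurableSet_Ioc Ioc_subset_Ioi_self ?_
    fun t ht ↦ barrierProfile_le_near_zero q s ht.1).union
    (hdominated measurableSet_Ioi (Ioi_subset_Ioi zero_le_one) ?_
    fun t ht ↦ barrierProfile_le_near_infty q s (zero_lt_one.trans ht))
  · have := intervalIntegral.intervalIntegrable_rpow' (a := 0) (b := 1) (r := 1 - 2 * s)
      (by linarith)
    exact ((intervalIntegrable_iff_integrableOn_Ioc_of_le zero_le_one).1 this).const_mul 2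
  · exact (integrableOn_Ioi_rpow_of_lt (by linarith) zero_lt_one).const_mul 8

lemma integrable_barrierProfile_abs {q s : ℝ} (hqs : q < s) (hs : s < 1) :
    Integrable fun r : ℝ ↦ barrierProfile q s |r| := by
  have := (integrable_fun_norm_addHaar (volume : Measure ℝ) (f := barrierProfile q s)).2
  simpa [Real.norm_eq_abs] using this (by simpa using integrableOn_barrierProfile_Ioi hqs hs)

lemma tendsto_const_mul_rpow_sub_mul_rpow_atBot {a b K ε : ℝ} (hab : a < b) (hb : 0 < b)
    (hε : 0 < ε) : Tendsto (fun t : ℝ ↦ K * t ^ a - ε * t ^ b) atTop atBot := by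
  have hdecay : Tendsto (fun t : ℝ ↦ K * t ^ (-(b - a)) - ε) atTop (𝓝 (K * 0 - ε)) :=
    ((tendsto_rpow_neg_atTop (by linarith)).const_mul K).sub_const ε
  refine ((tendsto_rpow_atTop hb).atTop_mul_neg (by linarith) hdecay).congr' ?_
  filter_upwards [eventually_gt_atTop 0] with t ht
  rw [mul_sub, mul_left_comm, ← Real.rpow_add ht]
  ring_nf

variable {E : Type*} [NormedAddCommGroup E] [ProperSpace E]

lemma exists_forall_sub_barrier_le {u : E → ℝ} (hu : Continuous u) {q K κ ε : ℝ}
    (hq : 0 < q) (hκq : κ < 2 * q) (hε : 0 < ε) (hgrowth : ∀ x, u x ≤ K * (1 + ‖x‖ ^ κ)) :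
    ∃ z, ∀ x, u x - ε * barrier q x ≤ u z - ε * barrier q z := by
  refine Continuous.exists_forall_ge (f := fun x ↦ u x - ε * barrier q x)
    (hu.sub (continuous_const.mul (continuous_barrier hq.le))) ?_
  have hcoercive := (tendsto_atBot_add_const_left _ K
    (tendsto_const_mul_rpow_sub_mul_rpow_atBot (K := K) hκq (by linarith) hε)).comp
    (tendsto_norm_cocompact_atTop (E := E))
  refine tendsto_atBot_mono (fun x ↦ ?_) hcoercive
  simp only [Function.comp_apply]
  linarith [hgrowth x, mul_le_mul_of_nonneg_left (rpow_le_barrier hq.le x) hε.le]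

local notation "𝕊" n => Metric.sphere (0 : EuclideanSpace ℝ (Fin n)) 1

lemma opI_le_of_forall_sub_barrier_le {n : ℕ} {s q ε : ℝ} (μ : Measure (𝕊 n))
    [IsFiniteMeasure μ] {u : EuclideanSpace ℝ (Fin n) → ℝ} {z : EuclideanSpace ℝ (Fin n)}
    (hq : 0 < q) (hqs : q < s) (hs : s < 1) (hε : 0 ≤ ε)
    (hz : ∀ x, u x - ε * barrier q x ≤ u z - ε * barrier q z) :
    opI n s μ u z ≤ ε * ∫ p : (𝕊 n) × ℝ, barrierProfile q s |p.2| ∂(μ.prod volume) := by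
  rw [opI, ← integral_const_mul]
  refine integral_mono_of_integral_nonneg
    (((integrable_barrierProfile_abs hqs hs).comp_snd μ).const_mul ε)
    (integral_nonneg fun p ↦ mul_nonneg hε (barrierProfile_nonneg q s (abs_nonneg p.2)))
    fun ⟨ϑ, r⟩ ↦ ?_
  set h := r • (ϑ : EuclideanSpace ℝ (Fin n))
  have hnorm : ‖h‖ = |r| := by
    rw [norm_smul, norm_eq_of_mem_sphere ϑ, mul_one, Real.norm_eq_abs]
  have hsecond := barrier_secondDiff_le_min hq (hqs.trans hs).le z h
  rw [hnorm] at hsecond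
  rw [barrierProfile, ← mul_div_assoc]
  gcongr
  linarith [hz (z + h), hz (z - h), mul_le_mul_of_nonneg_left hsecond hε]

theorem opI_nonpos_of_upper_growth_general
    (n : ℕ) (s : ℝ) (hs : s ∈ Set.Ioo (0 : ℝ) 1)
    (μ : Measure (Metric.sphere (0 : EuclideanSpace ℝ (Fin n)) 1)) [IsFiniteMeasure μ]
    (f : ℝ → ℝ) (hf_cont : Continuous f) (hf_mono : Monotone f)
    (u : EuclideanSpace ℝ (Fin n) → ℝ) (hu : ContDiff ℝ 2 u)
    (heq : ∀ x, opI n s μ u x = f (u x))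
    (K κ : ℝ) (hκ : κ < 2 * s)
    (hgrowth : ∀ x, u x ≤ K * (1 + ‖x‖ ^ κ)) :
    ∀ x, opI n s μ u x ≤ 0 := by
  obtain ⟨hs₀, hs₁⟩ := hs
  obtain ⟨q, hq, hqs⟩ := exists_between (max_lt (by linarith : κ / 2 < s) hs₀)
  obtain ⟨hκq, hq₀⟩ := max_lt_iff.1 hq
  set M := ∫ p : (𝕊 n) × ℝ, barrierProfile q s |p.2| ∂(μ.prod volume)
  have hperturbed : ∀ x, ∀ ε > 0, f (u x - ε * barrier q x) ≤ ε * M := by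
    intro x ε hε
    obtain ⟨z, hz⟩ := exists_forall_sub_barrier_le hu.continuous hq₀ (by linarith) hε hgrowth
    calc f (u x - ε * barrier q x) ≤ f (u z) :=
          hf_mono (by linarith [hz x, mul_nonneg hε.le (barrier_nonneg q z)])
      _ = opI n s μ u z := (heq z).symm
      _ ≤ ε * M := opI_le_of_forall_sub_barrier_le μ hq₀ hqs hs₁ hε.le hz
  intro x
  have hlimit := ContinuousWithinAt.closure_le (s := Set.Ioi 0) (x := 0)
    (by simp) (by fun_prop) (by fun_prop) (hperturbed x)
  simpa [heq x] using hlimit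

theorem opI_nonpos_of_upper_growth
    (n : ℕ) (hn : 1 ≤ n) (s : ℝ) (hs : s ∈ Set.Ioo (0 : ℝ) 1)
    (μ : Measure (Metric.sphere (0 : EuclideanSpace ℝ (Fin n)) 1)) [IsFiniteMeasure μ]
    (lam Λ : ℝ) (hlam : 0 < lam) (hΛ : 0 < Λ)
    (hnondeg : ∀ ν : Metric.sphere (0 : EuclideanSpace ℝ (Fin n)) 1,
      lam ≤ ∫ ϑ : Metric.sphere (0 : EuclideanSpace ℝ (Fin n)) 1,
        |⟪(ν : EuclideanSpace ℝ (Fin n)), (ϑ : EuclideanSpace ℝ (Fin n))⟫| ^ (2 * s) ∂μ)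
    (hμΛ : μ Set.univ ≤ ENNReal.ofReal Λ)
    (f : ℝ → ℝ) (hf_cont : Continuous f) (hf_mono : Monotone f)
    (u : EuclideanSpace ℝ (Fin n) → ℝ) (hu : ContDiff ℝ 2 u)
    (heq : ∀ x, opI n s μ u x = f (u x))
    (K κ : ℝ) (hK : 0 ≤ K) (hκ0 : 0 ≤ κ) (hκ : κ < 2 * s)
    (hgrowth : ∀ x, u x ≤ K * (1 + ‖x‖ ^ κ)) :
    ∀ x, opI n s μ u x ≤ 0 :=
  opI_nonpos_of_upper_growth_general n s hs μ f hf_cont hf_mono u hu heq K κ hκ hgrowth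
end

section
/- Let f : ℝ → ℝ be continuous and nondecreasing, and let u ∈ C²(ℝⁿ) satisfy ℐu(x) = f(u(x)) for every x ∈ ℝⁿ. If u(x) ≥ −K(1 + |x|^κ) for all x ∈ ℝⁿ, for some K ≥ 0 and κ ∈ [0, 2s), then ℐu(x) ≥ 0 for every x ∈ ℝⁿ. -/
open MeasureTheory
open scoped RealInnerProductSpace

/-!
Fix `x₀` and `δ > 0`, choose `κ < 2γ < 2s`, and let `z` minimize `u + δ (1 + |· - x₀|²)^γ`; the
minimum exists because `2γ > κ` beats the lower growth of `u`. The penalty is smallest at `x₀`, so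
`u z ≤ u x₀`. At the minimum the second differences of `u` are bounded below by `-δ` times those of
the penalty, which are `O(min(|w|², |w|^{2γ}))` uniformly in the base point; this is integrable
against `|r|^{-1-2s}` because `γ < s < 1`. Hence `ℐu(x₀) = f(u x₀) ≥ f(u z) = ℐu(z) ≥ -Cδ` with
`C` independent of `δ`, and `δ → 0`.
-/

open Set Filter Topology

lemma rpow_le_tangent_line {γ X Y : ℝ} (hγ0 : 0 ≤ γ) (hγ1 : γ ≤ 1) (hX : 0 ≤ X) (hY : 0 < Y) :
    X ^ γ ≤ Y ^ γ + γ * Y ^ (γ - 1) * (X - Y) := by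
  have bernoulli : (X / Y) ^ γ ≤ 1 + γ * (X / Y - 1) := by
    simpa using rpow_one_add_le_one_add_mul_self (s := X / Y - 1)
      (by linarith [div_nonneg hX hY.le]) hγ0 hγ1
  calc X ^ γ = Y ^ γ * (X / Y) ^ γ := by
        rw [← Real.mul_rpow hY.le (div_nonneg hX hY.le), mul_div_cancel₀ _ hY.ne']
    _ ≤ Y ^ γ * (1 + γ * (X / Y - 1)) := by gcongr
    _ = Y ^ γ + γ * (Y ^ γ / Y) * (X - Y) := by field_simp
    _ = Y ^ γ + γ * Y ^ (γ - 1) * (X - Y) := by rw [Real.rpow_sub_one hY.ne']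

lemma rpow_sub_one_mul_le_rpow {γ V W : ℝ} (hγ1 : γ ≤ 1) (hW : 0 ≤ W) (hWV : W ≤ V) :
    V ^ (γ - 1) * W ≤ W ^ γ := by
  rcases hW.eq_or_lt with rfl | hW
  · simpa using Real.rpow_nonneg le_rfl γ
  calc V ^ (γ - 1) * W ≤ W ^ (γ - 1) * W :=
        mul_le_mul_of_nonneg_right (Real.rpow_le_rpow_of_nonpos hW hWV (by linarith)) hW.le
    _ = W ^ γ := by rw [Real.rpow_sub_one hW.ne', div_mul_cancel₀ _ hW.ne']

lemma one_add_rpow_le_two_mul_rpow {κ t : ℝ} (hκ : 0 ≤ κ) (ht : 0 ≤ t) :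
    1 + t ^ κ ≤ 2 * (1 + t ^ 2) ^ (κ / 2) := by
  have h1 : 1 ≤ (1 + t ^ 2) ^ (κ / 2) := Real.one_le_rpow (by nlinarith) (by positivity)
  have h2 : t ^ κ ≤ (1 + t ^ 2) ^ (κ / 2) := by
    rw [show t ^ κ = (t ^ 2) ^ (κ / 2) by
      rw [← Real.rpow_natCast, ← Real.rpow_mul ht]; congr 1; push_cast; ring]
    exact Real.rpow_le_rpow (by positivity) (by linarith) (by positivity)
  linarith

lemma tendsto_mul_rpow_sub_mul_rpow_atTop {a b p q : ℝ} (ha : 0 < a) (hp : 0 < p) (hqp : q < p) :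
    Tendsto (fun t : ℝ => a * t ^ p - b * t ^ q) atTop atTop := by
  have hsmall : Tendsto (fun t : ℝ => a - b * t ^ (-(p - q))) atTop (𝓝 a) := by
    simpa using (tendsto_rpow_neg_atTop (sub_pos.2 hqp)).const_mul b |>.const_sub a
  refine ((tendsto_rpow_atTop hp).atTop_mul_pos ha hsmall).congr' ?_
  filter_upwards [eventually_gt_atTop 0] with t ht
  rw [Real.rpow_neg ht.le, Real.rpow_sub ht, mul_sub, inv_div]
  field_simp [(Real.rpow_pos_of_pos ht p).ne']

lemma nonneg_of_forall_pos_neg_mul_le {a C : ℝ} (h : ∀ δ, 0 < δ → -(δ * C) ≤ a) : 0 ≤ a := by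
  have hlim : Tendsto (fun δ : ℝ => -(δ * C)) (𝓝[>] 0) (𝓝 0) :=
    ((show Continuous fun δ : ℝ => -(δ * C) by fun_prop).tendsto' 0 0 (by simp)).mono_left
      nhdsWithin_le_nhds
  exact le_of_tendsto hlim (eventually_nhdsWithin_of_forall fun δ (hδ : δ ∈ Ioi 0) => h δ hδ)

noncomputable def bracketPow {E : Type*} [NormedAddCommGroup E] (γ : ℝ) (v : E) : ℝ :=
  (1 + ‖v‖ ^ 2) ^ γ

section bracketPow

variable {E : Type*} [NormedAddCommGroup E] {γ : ℝ}

lemma one_le_bracketPow (hγ : 0 ≤ γ) (v : E) : 1 ≤ bracketPow γ v :=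
  Real.one_le_rpow (by nlinarith [sq_nonneg ‖v‖]) hγ

@[simp] lemma bracketPow_zero : bracketPow γ (0 : E) = 1 := by simp [bracketPow]

lemma continuous_bracketPow (hγ : 0 ≤ γ) : Continuous (bracketPow γ : E → ℝ) :=
  (continuous_const.add (continuous_norm.pow 2)).rpow_const fun _ => Or.inr hγ

lemma one_add_norm_sq_le_mul (x y : E) :
    1 + ‖y‖ ^ 2 ≤ 2 * (1 + ‖x‖ ^ 2) * (1 + ‖y - x‖ ^ 2) := by
  have : ‖y‖ ^ 2 ≤ (‖x‖ + ‖y - x‖) ^ 2 := by gcongr; exact norm_le_insert' y x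
  nlinarith [sq_nonneg (‖x‖ - ‖y - x‖), mul_nonneg (sq_nonneg ‖x‖) (sq_nonneg ‖y - x‖)]

lemma rpow_div_le_bracketPow_sub (hγ : 0 ≤ γ) (x y : E) :
    (1 + ‖y‖ ^ 2) ^ γ / (2 * (1 + ‖x‖ ^ 2)) ^ γ ≤ bracketPow γ (y - x) := by
  rw [← Real.div_rpow (by positivity) (by positivity)]
  refine Real.rpow_le_rpow (by positivity) ?_ hγ
  rw [div_le_iff₀ (by positivity)]
  linarith [one_add_norm_sq_le_mul x y]

lemma bracketPow_secondDiff_le_of_le (hγ0 : 0 ≤ γ) (hγ1 : γ ≤ 1) {v w : E}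
    (hvw : 1 + ‖v‖ ^ 2 ≤ ‖w‖ ^ 2) :
    bracketPow γ (v + w) + bracketPow γ (v - w) - 2 * bracketPow γ v ≤ 8 * (‖w‖ ^ 2) ^ γ := by
  have key : ∀ x : E, ‖x‖ ≤ ‖v‖ + ‖w‖ → bracketPow γ x ≤ 4 * (‖w‖ ^ 2) ^ γ := by
    intro x hx
    calc bracketPow γ x ≤ (4 * ‖w‖ ^ 2) ^ γ := by
          refine Real.rpow_le_rpow (by positivity) ?_ hγ0
          nlinarith [norm_nonneg x, norm_nonneg v, norm_nonneg w, sq_nonneg (‖v‖ - ‖w‖)]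
      _ = 4 ^ γ * (‖w‖ ^ 2) ^ γ := Real.mul_rpow (by norm_num) (by positivity)
      _ ≤ 4 * (‖w‖ ^ 2) ^ γ := by
          gcongr
          simpa using Real.rpow_le_rpow_of_exponent_le (by norm_num : (1 : ℝ) ≤ 4) hγ1
  linarith [key _ (norm_add_le v w), key _ (norm_sub_le v w), one_le_bracketPow hγ0 v]

end bracketPow

lemma tendsto_add_mul_bracketPow_sub_cocompact {E : Type*} [NormedAddCommGroup E] [ProperSpace E]
    {u : E → ℝ} {K κ γ δ : ℝ} (hK : 0 ≤ K) (hκ0 : 0 ≤ κ) (hκγ : κ < 2 * γ) (hδ : 0 < δ)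
    (hgrowth : ∀ x, -(K * (1 + ‖x‖ ^ κ)) ≤ u x) (x₀ : E) :
    Tendsto (fun y => u y + δ * bracketPow γ (y - x₀)) (cocompact E) atTop := by
  have hT : Tendsto (fun y : E => 1 + ‖y‖ ^ 2) (cocompact E) atTop :=
    tendsto_atTop_add_const_left _ 1
      ((tendsto_pow_atTop two_ne_zero).comp tendsto_norm_cocompact_atTop)
  have hlim := (tendsto_mul_rpow_sub_mul_rpow_atTop (a := δ / (2 * (1 + ‖x₀‖ ^ 2)) ^ γ)
    (b := 2 * K) (by positivity) (by linarith) (by linarith : κ / 2 < γ)).comp hT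
  refine tendsto_atTop_mono (fun y => ?_) hlim
  have hpen :=
    mul_le_mul_of_nonneg_left (rpow_div_le_bracketPow_sub (γ := γ) (by linarith) x₀ y) hδ.le
  have hgrowth' := mul_le_mul_of_nonneg_left (one_add_rpow_le_two_mul_rpow hκ0 (norm_nonneg y)) hK
  simp only [Function.comp_apply]
  linarith [hgrowth y, show δ / (2 * (1 + ‖x₀‖ ^ 2)) ^ γ * (1 + ‖y‖ ^ 2) ^ γ
    = δ * ((1 + ‖y‖ ^ 2) ^ γ / (2 * (1 + ‖x₀‖ ^ 2)) ^ γ) by ring]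

section secondDiff

variable {E : Type*} [NormedAddCommGroup E] [InnerProductSpace ℝ E] {γ : ℝ}

lemma bracketPow_secondDiff_le_tangent (hγ0 : 0 ≤ γ) (hγ1 : γ ≤ 1) (v w : E) :
    bracketPow γ (v + w) + bracketPow γ (v - w) - 2 * bracketPow γ v
      ≤ 2 * γ * (1 + ‖v‖ ^ 2) ^ (γ - 1) * ‖w‖ ^ 2 := by
  have hpar : ‖v + w‖ ^ 2 + ‖v - w‖ ^ 2 = 2 * ‖v‖ ^ 2 + 2 * ‖w‖ ^ 2 := by
    have := parallelogram_law_with_norm ℝ v w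
    simp only [sq]; linarith
  have hV : (0 : ℝ) < 1 + ‖v‖ ^ 2 := by positivity
  have hplus := rpow_le_tangent_line (X := 1 + ‖v + w‖ ^ 2) hγ0 hγ1 (by positivity) hV
  have hminus := rpow_le_tangent_line (X := 1 + ‖v - w‖ ^ 2) hγ0 hγ1 (by positivity) hV
  simp only [bracketPow]
  linear_combination hplus + hminus + γ * (1 + ‖v‖ ^ 2) ^ (γ - 1) * hpar

lemma bracketPow_secondDiff_le (hγ0 : 0 ≤ γ) (hγ1 : γ ≤ 1) (v w : E) :
    bracketPow γ (v + w) + bracketPow γ (v - w) - 2 * bracketPow γ v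
      ≤ 8 * min (‖w‖ ^ 2) ((‖w‖ ^ 2) ^ γ) := by
  have hV : 1 ≤ 1 + ‖v‖ ^ 2 := by nlinarith [sq_nonneg ‖v‖]
  have htan := bracketPow_secondDiff_le_tangent hγ0 hγ1 v w
  have hVpow : (1 + ‖v‖ ^ 2) ^ (γ - 1) ≤ 1 := Real.rpow_le_one_of_one_le_of_nonpos hV (by linarith)
  have hVpow0 : 0 ≤ (1 + ‖v‖ ^ 2) ^ (γ - 1) := by positivity
  rw [mul_min_of_nonneg _ _ (by norm_num)]
  refine le_min ?_ ?_
  · nlinarith [mul_nonneg (mul_nonneg (sub_nonneg.2 hγ1) hVpow0) (sq_nonneg ‖w‖),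
      mul_nonneg hγ0 (mul_nonneg hVpow0 (sq_nonneg ‖w‖))]
  rcases le_or_gt (1 + ‖v‖ ^ 2) (‖w‖ ^ 2) with hVW | hWV
  · exact bracketPow_secondDiff_le_of_le hγ0 hγ1 hVW
  · have := rpow_sub_one_mul_le_rpow hγ1 (sq_nonneg ‖w‖) hWV.le
    have := Real.rpow_nonneg (sq_nonneg ‖w‖) γ
    nlinarith [mul_nonneg (sub_nonneg.2 hγ1) this]

end secondDiff

lemma secondDiff_ge_of_forall_add_mul_bracketPow_le {E : Type*} [NormedAddCommGroup E]
    [InnerProductSpace ℝ E] {u : E → ℝ} {γ δ : ℝ} (hγ0 : 0 ≤ γ) (hγ1 : γ ≤ 1) (hδ : 0 ≤ δ)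
    {x₀ z : E} (hz : ∀ y, u z + δ * bracketPow γ (z - x₀) ≤ u y + δ * bracketPow γ (y - x₀))
    (w : E) : -(8 * δ * min (‖w‖ ^ 2) ((‖w‖ ^ 2) ^ γ)) ≤ u (z + w) + u (z - w) - 2 * u z := by
  have hplus := hz (z + w)
  have hminus := hz (z - w)
  rw [show z + w - x₀ = z - x₀ + w by abel] at hplus
  rw [show z - w - x₀ = z - x₀ - w by abel] at hminus
  linarith [mul_le_mul_of_nonneg_left (bracketPow_secondDiff_le hγ0 hγ1 (z - x₀) w) hδ]

lemma IntegrableOn.integrable_comp_abs {f : ℝ → ℝ} (hf : IntegrableOn f (Ioi 0)) :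
    Integrable fun x => f |x| := by
  have hIoi : IntegrableOn (fun x => f |x|) (Ioi 0) :=
    hf.congr_fun (fun x hx => by rw [abs_of_pos hx]) measurableSet_Ioi
  have hIic : IntegrableOn (fun x => f |x|) (Iic 0) := by
    have hneg : MeasurableEmbedding fun x : ℝ => -x := (Homeomorph.neg ℝ).measurableEmbedding
    rw [← Measure.map_neg_eq_self (volume : Measure ℝ), hneg.integrableOn_map_iff]
    simp_rw [Function.comp_def, abs_neg, neg_preimage, neg_Iic, neg_zero]
    exact (integrableOn_Ici_iff_integrableOn_Ioi).mpr hIoi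
  simpa [Iic_union_Ioi] using hIic.union hIoi

noncomputable def penaltyKernel (s γ r : ℝ) : ℝ := min (r ^ 2) ((r ^ 2) ^ γ) / |r| ^ (1 + 2 * s)

lemma penaltyKernel_nonneg (s γ r : ℝ) : 0 ≤ penaltyKernel s γ r := by
  unfold penaltyKernel; positivity

lemma integrable_penaltyKernel {s γ : ℝ} (hs1 : s < 1) (hγs : γ < s) :
    Integrable (penaltyKernel s γ) := by
  set G : ℝ → ℝ := fun t => min (t ^ 2) ((t ^ 2) ^ γ) / t ^ (1 + 2 * s)
  have hG : penaltyKernel s γ = fun r => G |r| := by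
    funext r; simp [G, penaltyKernel, sq_abs]
  have hGmeas : AEStronglyMeasurable G := by fun_prop
  have hG0 : ∀ t, 0 < t → 0 ≤ G t := fun t ht => by simp only [G]; positivity
  rw [hG]
  refine IntegrableOn.integrable_comp_abs ?_
  rw [← Ioc_union_Ioi_eq_Ioi zero_le_one]
  refine IntegrableOn.union ?_ ?_
  · have hdom : IntegrableOn (fun t : ℝ => t ^ (1 - 2 * s)) (Ioc 0 1) :=
      (intervalIntegrable_iff_integrableOn_Ioc_of_le zero_le_one).1
        (intervalIntegral.intervalIntegrable_rpow' (by linarith))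
    refine hdom.mono' hGmeas.restrict (ae_restrict_of_forall_mem measurableSet_Ioc ?_)
    intro t ht
    rw [Real.norm_of_nonneg (hG0 t ht.1), show 1 - 2 * s = 2 - (1 + 2 * s) by ring,
      Real.rpow_sub ht.1, Real.rpow_two]
    exact div_le_div_of_nonneg_right (min_le_left _ _) (Real.rpow_nonneg ht.1.le _)
  · have hdom : IntegrableOn (fun t : ℝ => t ^ (2 * γ - (1 + 2 * s))) (Ioi 1) :=
      integrableOn_Ioi_rpow_of_lt (by linarith) one_pos
    refine hdom.mono' hGmeas.restrict (ae_restrict_of_forall_mem measurableSet_Ioi ?_)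
    intro t ht
    have ht0 : 0 < t := zero_lt_one.trans ht
    rw [Real.norm_of_nonneg (hG0 t ht0), Real.rpow_sub ht0, Real.rpow_mul ht0.le, Real.rpow_two]
    exact div_le_div_of_nonneg_right (min_le_right _ _) (by positivity)

lemma neg_measureReal_mul_integral_le_integral_prod {α β : Type*} [MeasurableSpace α]
    [MeasurableSpace β] {μ : Measure α} [IsFiniteMeasure μ] {ν : Measure β} [SFinite ν]
    {g : β → ℝ} {F : α × β → ℝ} (hg : Integrable g ν) (hg0 : 0 ≤ g) (hF : ∀ p, -g p.2 ≤ F p) :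
    -(μ.real univ * ∫ y, g y ∂ν) ≤ ∫ p, F p ∂μ.prod ν := by
  by_cases hFi : Integrable F (μ.prod ν)
  · calc -(μ.real univ * ∫ y, g y ∂ν) = ∫ p, -g p.2 ∂μ.prod ν := by
          rw [integral_neg, integral_fun_snd, smul_eq_mul]
      _ ≤ ∫ p, F p ∂μ.prod ν := integral_mono (hg.comp_snd μ).neg hFi hF
  · rw [integral_undef hFi, neg_nonpos]
    exact mul_nonneg measureReal_nonneg (integral_nonneg hg0)

lemma neg_le_opI_of_secondDiff_ge {n : ℕ} {s γ c : ℝ} (hs1 : s < 1) (hγs : γ < s) (hc : 0 ≤ c)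
    (μ : Measure (Metric.sphere (0 : EuclideanSpace ℝ (Fin n)) 1)) [IsFiniteMeasure μ]
    {u : EuclideanSpace ℝ (Fin n) → ℝ} {z : EuclideanSpace ℝ (Fin n)}
    (h : ∀ w, -(c * min (‖w‖ ^ 2) ((‖w‖ ^ 2) ^ γ)) ≤ u (z + w) + u (z - w) - 2 * u z) :
    -(c * μ.real univ * ∫ r, penaltyKernel s γ r) ≤ opI n s μ u z := by
  have hint := neg_measureReal_mul_integral_le_integral_prod (μ := μ)
    ((integrable_penaltyKernel hs1 hγs).const_mul c)
    (fun r => mul_nonneg hc (penaltyKernel_nonneg s γ r)) (F := fun p =>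
      (u (z + p.2 • (p.1 : EuclideanSpace ℝ (Fin n))) +
        u (z - p.2 • (p.1 : EuclideanSpace ℝ (Fin n))) - 2 * u z) / |p.2| ^ (1 + 2 * s))
    (fun ⟨ϑ, r⟩ => by
      have hw : ‖r • (ϑ : EuclideanSpace ℝ (Fin n))‖ ^ 2 = r ^ 2 := by
        rw [norm_smul, norm_eq_of_mem_sphere ϑ, mul_one, Real.norm_eq_abs, sq_abs]
      have := div_le_div_of_nonneg_right (h (r • ϑ)) (by positivity : 0 ≤ |r| ^ (1 + 2 * s))
      rwa [hw, neg_div, mul_div_assoc] at this)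
  rw [integral_const_mul, ← mul_assoc, mul_comm (μ.real univ)] at hint
  exact hint

theorem opI_nonneg_of_lower_growth_general
    (n : ℕ) (s : ℝ) (hs : s ∈ Set.Ioo (0 : ℝ) 1)
    (μ : Measure (Metric.sphere (0 : EuclideanSpace ℝ (Fin n)) 1)) [IsFiniteMeasure μ]
    (f : ℝ → ℝ) (hf_mono : Monotone f)
    (u : EuclideanSpace ℝ (Fin n) → ℝ) (hu : ContDiff ℝ 2 u)
    (heq : ∀ x, opI n s μ u x = f (u x))
    (K κ : ℝ) (hK : 0 ≤ K) (hκ0 : 0 ≤ κ) (hκ : κ < 2 * s)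
    (hgrowth : ∀ x, -(K * (1 + ‖x‖ ^ κ)) ≤ u x) :
    ∀ x, 0 ≤ opI n s μ u x := by
  intro x₀
  obtain ⟨γ, hκγ, hγs⟩ : ∃ γ, κ < 2 * γ ∧ γ < s := ⟨(κ + 2 * s) / 4, by linarith, by linarith⟩
  have hγ0 : 0 ≤ γ := by linarith
  refine nonneg_of_forall_pos_neg_mul_le
    (C := 8 * μ.real univ * ∫ r, penaltyKernel s γ r) fun δ hδ => ?_
  have hcont : Continuous fun y => u y + δ * bracketPow γ (y - x₀) :=
    hu.continuous.add (continuous_const.mul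
      ((continuous_bracketPow hγ0).comp (continuous_sub_right x₀)))
  obtain ⟨z, hz⟩ :=
    hcont.exists_forall_le (tendsto_add_mul_bracketPow_sub_cocompact hK hκ0 hκγ hδ hgrowth x₀)
  have huz : u z ≤ u x₀ := by
    have := hz x₀
    simp only [sub_self, bracketPow_zero] at this
    linarith [mul_le_mul_of_nonneg_left (one_le_bracketPow hγ0 (z - x₀)) hδ.le]
  calc -(δ * (8 * μ.real univ * ∫ r, penaltyKernel s γ r))
      = -(8 * δ * μ.real univ * ∫ r, penaltyKernel s γ r) := by ring
    _ ≤ opI n s μ u z := neg_le_opI_of_secondDiff_ge hs.2 hγs (by positivity) μ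
        (secondDiff_ge_of_forall_add_mul_bracketPow_le hγ0 (by linarith [hs.2]) hδ.le hz)
    _ = f (u z) := heq z
    _ ≤ f (u x₀) := hf_mono huz
    _ = opI n s μ u x₀ := (heq x₀).symm

theorem opI_nonneg_of_lower_growth
    (n : ℕ) (hn : 1 ≤ n) (s : ℝ) (hs : s ∈ Set.Ioo (0 : ℝ) 1)
    (μ : Measure (Metric.sphere (0 : EuclideanSpace ℝ (Fin n)) 1)) [IsFiniteMeasure μ]
    (lam Λ : ℝ) (hlam : 0 < lam) (hΛ : 0 < Λ)
    (hnondeg : ∀ ν : Metric.sphere (0 : EuclideanSpace ℝ (Fin n)) 1,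
      lam ≤ ∫ ϑ : Metric.sphere (0 : EuclideanSpace ℝ (Fin n)) 1,
        |⟪(ν : EuclideanSpace ℝ (Fin n)), (ϑ : EuclideanSpace ℝ (Fin n))⟫| ^ (2 * s) ∂μ)
    (hμΛ : μ Set.univ ≤ ENNReal.ofReal Λ)
    (f : ℝ → ℝ) (hf_cont : Continuous f) (hf_mono : Monotone f)
    (u : EuclideanSpace ℝ (Fin n) → ℝ) (hu : ContDiff ℝ 2 u)
    (heq : ∀ x, opI n s μ u x = f (u x))
    (K κ : ℝ) (hK : 0 ≤ K) (hκ0 : 0 ≤ κ) (hκ : κ < 2 * s)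
    (hgrowth : ∀ x, -(K * (1 + ‖x‖ ^ κ)) ≤ u x) :
    ∀ x, 0 ≤ opI n s μ u x :=
  opI_nonneg_of_lower_growth_general n s hs μ f hf_mono u hu heq K κ hK hκ0 hκ hgrowth
end

section
/- Let γ ∈ (0, 2s). Then for every x ∈ ℝⁿ with |x| ≥ 1 one has ∫_{S^{n-1} × ℝ} (|x + ϑr|^γ + |x − ϑr|^γ − 2|x|^γ) dμ(ϑ) dr / |r|^{1+2s} ≤ C |x|^{γ−2s}, where C > 0 depends only on n, s, Λ and γ. -/
/-!
Write `δ(x, u) = ‖x + u‖ ^ γ + ‖x - u‖ ^ γ - 2 ‖x‖ ^ γ` and split the `r`-integral at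
`|r| = ‖x‖ / 2`. For small `|r|`, a first-order Taylor expansion of `t ↦ t ^ γ` around `‖x‖`,
combined with the parallelogram law, gives `|δ(x, rϑ)| ≲ ‖x‖ ^ (γ - 2) r ^ 2`, which is
integrable against `|r| ^ (-1 - 2s)` near `0` because `s < 1`. For large `|r|` one simply has
`|δ(x, rϑ)| ≲ |r| ^ γ`, integrable at infinity because `γ < 2s`. Both pieces are homogeneous of
degree `γ - 2s` in `‖x‖`, and integrating in `ϑ` costs a factor `μ(S^{n-1}) ≤ Λ`.
-/

open MeasureTheory Set Real

lemma abs_rpow_sub_rpow_le {β m t c : ℝ} (hm : 0 < m) (hβ : β ≤ 1) (ht : m ≤ t) (hc : m ≤ c) :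
    |t ^ β - c ^ β| ≤ |β| * m ^ (β - 1) * |t - c| := by
  have hderiv : ∀ y ∈ Ici m, HasDerivWithinAt (· ^ β) (β * y ^ (β - 1)) (Ici m) y :=
    fun y hy => (hasDerivAt_rpow_const (Or.inl (hm.trans_le hy).ne')).hasDerivWithinAt
  have hbound : ∀ y ∈ Ici m, ‖β * y ^ (β - 1)‖ ≤ |β| * m ^ (β - 1) := fun y hy => by
    rw [norm_mul, norm_eq_abs, norm_eq_abs, abs_of_nonneg (rpow_nonneg (hm.le.trans hy) _)]
    exact mul_le_mul_of_nonneg_left (rpow_le_rpow_of_nonpos hm hy (by linarith)) (abs_nonneg β)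
  simpa only [norm_eq_abs] using
    (convex_Ici m).norm_image_sub_le_of_norm_hasDerivWithin_le hderiv hbound hc ht

lemma abs_rpow_sub_linearization_le {γ m t c : ℝ} (hm : 0 < m) (hγ : γ ≤ 2) (ht : m ≤ t)
    (hc : m ≤ c) :
    |t ^ γ - c ^ γ - γ * c ^ (γ - 1) * (t - c)| ≤ |γ * (γ - 1)| * m ^ (γ - 2) * (t - c) ^ 2 := by
  have hsub : uIcc c t ⊆ Ici m := fun y hy => (le_min hc ht).trans hy.1
  set K := |γ * (γ - 1)| * m ^ (γ - 2)
  have hderiv : ∀ y ∈ uIcc c t, HasDerivWithinAt (fun y => y ^ γ - γ * c ^ (γ - 1) * y)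
      (γ * (y ^ (γ - 1) - c ^ (γ - 1))) (uIcc c t) y := fun y hy =>
    (((hasDerivAt_rpow_const (Or.inl (hm.trans_le (hsub hy)).ne')).sub
      ((hasDerivAt_id y).const_mul _)).congr_deriv (by ring)).hasDerivWithinAt
  have hbound : ∀ y ∈ uIcc c t, ‖γ * (y ^ (γ - 1) - c ^ (γ - 1))‖ ≤ K * |t - c| := fun y hy => by
    have hlip := abs_rpow_sub_rpow_le (β := γ - 1) hm (by linarith) (hsub hy) hc
    rw [show γ - 1 - 1 = γ - 2 by ring] at hlip
    calc ‖γ * (y ^ (γ - 1) - c ^ (γ - 1))‖ ≤ |γ| * (|γ - 1| * m ^ (γ - 2) * |y - c|) := by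
          rw [norm_mul, norm_eq_abs, norm_eq_abs]; gcongr
      _ = K * |y - c| := by simp only [K, abs_mul]; ring
      _ ≤ K * |t - c| :=
          mul_le_mul_of_nonneg_left (abs_sub_left_of_mem_uIcc hy) (by simp only [K]; positivity)
  have hmvt := (convex_uIcc c t).norm_image_sub_le_of_norm_hasDerivWithin_le hderiv hbound
    left_mem_uIcc right_mem_uIcc
  rw [norm_eq_abs] at hmvt
  calc |t ^ γ - c ^ γ - γ * c ^ (γ - 1) * (t - c)|
      = |t ^ γ - γ * c ^ (γ - 1) * t - (c ^ γ - γ * c ^ (γ - 1) * c)| := by ring_nf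
    _ ≤ K * |t - c| * ‖t - c‖ := hmvt
    _ = K * (t - c) ^ 2 := by rw [norm_eq_abs, mul_assoc, ← abs_mul, ← sq, abs_sq]

lemma half_rpow_le_four_mul_rpow {R γ : ℝ} (hR : 0 ≤ R) (hγ : 0 ≤ γ) :
    (R / 2) ^ (γ - 2) ≤ 4 * R ^ (γ - 2) := by
  rw [div_eq_inv_mul, mul_rpow (by norm_num) hR]
  gcongr
  calc (2⁻¹ : ℝ) ^ (γ - 2) ≤ 2⁻¹ ^ (-2 : ℝ) := rpow_le_rpow_of_exponent_ge (by norm_num)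
        (by norm_num) (by linarith)
    _ = 4 := by rw [rpow_neg (by norm_num), inv_rpow (by norm_num), inv_inv]; norm_num

lemma abs_rpow_add_rpow_sub_two_mul_rpow_le {γ R a b w : ℝ} (hγ₀ : 0 ≤ γ) (hγ₂ : γ ≤ 2)
    (hR : 0 < R) (ha : |a - R| ≤ w) (hb : |b - R| ≤ w) (hw : w ≤ R / 2)
    (hab : |a + b - 2 * R| ≤ w ^ 2 / R) :
    |a ^ γ + b ^ γ - 2 * R ^ γ| ≤ 18 * R ^ (γ - 2) * w ^ 2 := by
  have hquad : ∀ t, |t - R| ≤ w → |t ^ γ - R ^ γ - γ * R ^ (γ - 1) * (t - R)| ≤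
      8 * R ^ (γ - 2) * w ^ 2 := fun t ht => by
    have hcoef : |γ * (γ - 1)| ≤ 2 := by
      rw [abs_le]; constructor <;> nlinarith
    have hsq : (t - R) ^ 2 ≤ w ^ 2 := sq_le_sq' (abs_le.1 ht).1 (abs_le.1 ht).2
    calc _ ≤ |γ * (γ - 1)| * (R / 2) ^ (γ - 2) * (t - R) ^ 2 :=
          abs_rpow_sub_linearization_le (by positivity) hγ₂
            (by linarith [(abs_le.1 ht).1]) (by linarith)
      _ ≤ 2 * (4 * R ^ (γ - 2)) * w ^ 2 := by
          gcongr; exact half_rpow_le_four_mul_rpow hR.le hγ₀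
      _ = 8 * R ^ (γ - 2) * w ^ 2 := by ring
  have hlin : |γ * R ^ (γ - 1) * (a + b - 2 * R)| ≤ 2 * R ^ (γ - 2) * w ^ 2 :=
    calc _ = γ * R ^ (γ - 1) * |a + b - 2 * R| := by
          rw [abs_mul, abs_of_nonneg (by positivity)]
      _ ≤ 2 * R ^ (γ - 1) * (w ^ 2 / R) := by gcongr
      _ = 2 * R ^ (γ - 2) * w ^ 2 := by
          rw [show γ - 1 = γ - 2 + 1 by ring, rpow_add_one hR.ne']; field_simp
  calc |a ^ γ + b ^ γ - 2 * R ^ γ|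
      = |(a ^ γ - R ^ γ - γ * R ^ (γ - 1) * (a - R)) + (b ^ γ - R ^ γ - γ * R ^ (γ - 1) * (b - R))
          + γ * R ^ (γ - 1) * (a + b - 2 * R)| := by ring_nf
    _ ≤ _ := abs_add_three _ _ _
    _ ≤ 8 * R ^ (γ - 2) * w ^ 2 + 8 * R ^ (γ - 2) * w ^ 2 + 2 * R ^ (γ - 2) * w ^ 2 := by
        gcongr
        exacts [hquad a ha, hquad b hb]
    _ = 18 * R ^ (γ - 2) * w ^ 2 := by ring

def secondDiff {E : Type*} [AddCommGroup E] (f : E → ℝ) (x u : E) : ℝ :=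
  f (x + u) + f (x - u) - 2 * f x

section secondDiff

variable {E : Type*}

/-- The parallelogram law gives `(‖x + u‖ + ‖x - u‖) ^ 2 ≤ 4 (‖x‖ ^ 2 + ‖u‖ ^ 2)`. -/
lemma abs_norm_add_add_norm_sub_sub_le [NormedAddCommGroup E] [InnerProductSpace ℝ E]
    {x : E} (hx : x ≠ 0) (u : E) :
    |‖x + u‖ + ‖x - u‖ - 2 * ‖x‖| ≤ ‖u‖ ^ 2 / ‖x‖ := by
  have hR : 0 < ‖x‖ := norm_pos_iff.2 hx
  have hlower : 2 * ‖x‖ ≤ ‖x + u‖ + ‖x - u‖ := by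
    calc 2 * ‖x‖ = ‖(x + u) + (x - u)‖ := by
          rw [add_add_sub_cancel, ← two_smul ℝ, norm_smul]; simp
      _ ≤ _ := norm_add_le _ _
  have hupper : ‖x + u‖ + ‖x - u‖ ≤ 2 * ‖x‖ + ‖u‖ ^ 2 / ‖x‖ := by
    have hpar := parallelogram_law_with_norm ℝ x u
    have hq : ‖u‖ ^ 2 / ‖x‖ * ‖x‖ = ‖u‖ ^ 2 := div_mul_cancel₀ _ hR.ne'
    refine le_of_pow_le_pow_left₀ two_ne_zero (by positivity) ?_
    nlinarith [sq_nonneg (‖x + u‖ - ‖x - u‖), sq_nonneg (‖u‖ ^ 2 / ‖x‖)]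
  rw [abs_le]; constructor <;> linarith

lemma abs_secondDiff_norm_rpow_le_of_norm_le_half [NormedAddCommGroup E] [InnerProductSpace ℝ E]
    {γ : ℝ} (hγ₀ : 0 ≤ γ) (hγ₂ : γ ≤ 2) {x u : E} (hx : x ≠ 0) (hu : ‖u‖ ≤ ‖x‖ / 2) :
    |secondDiff (‖·‖ ^ γ) x u| ≤ 18 * ‖x‖ ^ (γ - 2) * ‖u‖ ^ 2 :=
  abs_rpow_add_rpow_sub_two_mul_rpow_le hγ₀ hγ₂ (norm_pos_iff.2 hx)
    (by simpa using abs_norm_sub_norm_le (x + u) x)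
    (by simpa using abs_norm_sub_norm_le (x - u) x) hu (abs_norm_add_add_norm_sub_sub_le hx u)

lemma abs_secondDiff_norm_rpow_le_of_norm_le_two_mul [SeminormedAddCommGroup E] {γ : ℝ}
    (hγ : 0 ≤ γ) {x u : E} (hu : ‖x‖ ≤ 2 * ‖u‖) :
    |secondDiff (‖·‖ ^ γ) x u| ≤ 2 * 3 ^ γ * ‖u‖ ^ γ := by
  have hle : ∀ y : E, ‖y‖ ≤ 3 * ‖u‖ → ‖y‖ ^ γ ≤ 3 ^ γ * ‖u‖ ^ γ := fun y hy => by
    rw [← mul_rpow (by norm_num) (norm_nonneg u)]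
    exact rpow_le_rpow (norm_nonneg y) hy hγ
  have hadd := hle (x + u) (by linarith [norm_add_le x u])
  have hsub := hle (x - u) (by linarith [norm_sub_le x u])
  have hx := hle x (by linarith [norm_nonneg u])
  have := rpow_nonneg (norm_nonneg (x + u)) γ
  have := rpow_nonneg (norm_nonneg (x - u)) γ
  have := rpow_nonneg (norm_nonneg x) γ
  rw [secondDiff, abs_le]; constructor <;> linarith

end secondDiff

noncomputable def splitPow (m A p B q t : ℝ) : ℝ := if t ≤ m then A * t ^ p else B * t ^ q

section splitPow

variable {m A p B q : ℝ}

lemma splitPow_eqOn_Ioc : EqOn (splitPow m A p B q) (fun t => A * t ^ p) (Ioc 0 m) :=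
  fun _ ht => if_pos ht.2

lemma splitPow_eqOn_Ioi : EqOn (splitPow m A p B q) (fun t => B * t ^ q) (Ioi m) :=
  fun _ ht => if_neg (not_le.2 ht)

lemma splitPow_nonneg (hA : 0 ≤ A) (hB : 0 ≤ B) {t : ℝ} (ht : 0 ≤ t) :
    0 ≤ splitPow m A p B q t := by
  unfold splitPow; split_ifs <;> positivity

lemma integrableOn_Ioi_splitPow (hm : 0 < m) (hp : -1 < p) (hq : q < -1) :
    IntegrableOn (splitPow m A p B q) (Ioi 0) := by
  have hIoc : IntegrableOn (fun t : ℝ => A * t ^ p) (Ioc 0 m) :=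
    ((intervalIntegrable_iff_integrableOn_Ioc_of_le hm.le).1
      (intervalIntegral.intervalIntegrable_rpow' hp)).const_mul A
  have hIoi : IntegrableOn (fun t : ℝ => B * t ^ q) (Ioi m) :=
    (integrableOn_Ioi_rpow_of_lt hq hm).const_mul B
  rw [← Ioc_union_Ioi_eq_Ioi hm.le]
  exact (hIoc.congr_fun splitPow_eqOn_Ioc.symm measurableSet_Ioc).union
    (hIoi.congr_fun splitPow_eqOn_Ioi.symm measurableSet_Ioi)

lemma integral_Ioi_splitPow (hm : 0 < m) (hp : -1 < p) (hq : q < -1) :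
    ∫ t in Ioi 0, splitPow m A p B q t = A * m ^ (p + 1) / (p + 1) - B * m ^ (q + 1) / (q + 1) := by
  have hint := integrableOn_Ioi_splitPow (A := A) (B := B) hm hp hq
  rw [← Ioc_union_Ioi_eq_Ioi hm.le] at hint ⊢
  rw [setIntegral_union (Ioc_disjoint_Ioi le_rfl) measurableSet_Ioi
      (hint.mono_set subset_union_left) (hint.mono_set subset_union_right),
    setIntegral_congr_fun measurableSet_Ioc splitPow_eqOn_Ioc,
    setIntegral_congr_fun measurableSet_Ioi splitPow_eqOn_Ioi,
    integral_const_mul, integral_const_mul, ← intervalIntegral.integral_of_le hm.le,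
    integral_rpow (Or.inl hp), integral_Ioi_rpow_of_lt hq hm,
    zero_rpow (by linarith : p + 1 ≠ 0)]
  ring

end splitPow

lemma integrable_comp_abs_of_integrableOn_Ioi {f : ℝ → ℝ} (hf : IntegrableOn f (Ioi 0)) :
    Integrable (fun x => f |x|) := by
  have hIoi : IntegrableOn (fun x => f |x|) (Ioi 0) :=
    hf.congr_fun (fun x hx => by rw [abs_of_pos hx]) measurableSet_Ioi
  have hIic : IntegrableOn (fun x => f |x|) (Iic 0) := by
    have hneg : MeasurableEmbedding (fun x : ℝ => -x) := (Homeomorph.neg ℝ).measurableEmbedding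
    rw [← Measure.map_neg_eq_self (volume : Measure ℝ), hneg.integrableOn_map_iff]
    simp_rw [Function.comp_def, abs_neg, neg_preimage, neg_Iic, neg_zero]
    exact (integrableOn_Ici_iff_integrableOn_Ioi).mpr hIoi
  rw [← integrableOn_univ, ← Iic_union_Ioi (a := (0 : ℝ))]
  exact hIic.union hIoi

lemma integrable_splitPow_abs {m A p B q : ℝ} (hm : 0 < m) (hp : -1 < p) (hq : q < -1) :
    Integrable (fun r => splitPow m A p B q |r|) :=
  integrable_comp_abs_of_integrableOn_Ioi (integrableOn_Ioi_splitPow hm hp hq)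

lemma integral_splitPow_abs_half {R A B γ σ : ℝ} (hR : 0 < R) (hσ : σ < 2) (hγσ : γ < σ) :
    ∫ r, splitPow (R / 2) (A * R ^ (γ - 2)) (1 - σ) B (γ - 1 - σ) |r| =
      2 * (A * 2⁻¹ ^ (2 - σ) / (2 - σ) + B * 2⁻¹ ^ (γ - σ) / (σ - γ)) * R ^ (γ - σ) := by
  have hhalf : ∀ e : ℝ, (R / 2) ^ e = 2⁻¹ ^ e * R ^ e := fun e => by
    rw [div_eq_inv_mul, mul_rpow (by norm_num) hR.le]
  have hpow : R ^ (γ - σ) = R ^ (γ - 2) * R ^ (2 - σ) := by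
    rw [← rpow_add hR]; ring_nf
  have h₁ : 2 - σ ≠ 0 := by linarith
  have h₂ : σ - γ ≠ 0 := by linarith
  have h₃ : γ - σ ≠ 0 := by linarith
  rw [integral_comp_abs (f := fun t => splitPow _ _ _ _ _ t),
    integral_Ioi_splitPow (by positivity) (by linarith) (by linarith),
    show 1 - σ + 1 = 2 - σ by ring, show γ - 1 - σ + 1 = γ - σ by ring, hhalf, hhalf, hpow]
  field_simp
  ring

lemma abs_secondDiff_norm_rpow_div_le_splitPow {E : Type*} [NormedAddCommGroup E]
    [InnerProductSpace ℝ E] {γ : ℝ} (hγ₀ : 0 ≤ γ) (hγ₂ : γ ≤ 2) (σ : ℝ) {x : E} (hx : x ≠ 0)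
    (u : E) :
    |secondDiff (‖·‖ ^ γ) x u| / ‖u‖ ^ (1 + σ) ≤
      splitPow (‖x‖ / 2) (18 * ‖x‖ ^ (γ - 2)) (1 - σ) (2 * 3 ^ γ) (γ - 1 - σ) ‖u‖ := by
  rcases eq_or_ne u 0 with rfl | hu
  · simp only [secondDiff, add_zero, sub_zero, norm_zero]
    rw [show ‖x‖ ^ γ + ‖x‖ ^ γ - 2 * ‖x‖ ^ γ = 0 by ring, abs_zero, zero_div]
    exact splitPow_nonneg (by positivity) (by positivity) le_rfl
  have hu₀ : 0 < ‖u‖ := norm_pos_iff.2 hu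
  rw [div_le_iff₀ (rpow_pos_of_pos hu₀ _), splitPow]
  split_ifs with hsmall
  · calc _ ≤ 18 * ‖x‖ ^ (γ - 2) * ‖u‖ ^ 2 :=
          abs_secondDiff_norm_rpow_le_of_norm_le_half hγ₀ hγ₂ hx hsmall
      _ = _ := by rw [mul_assoc _ (‖u‖ ^ _), ← rpow_add hu₀, ← rpow_two]; ring_nf
  · calc _ ≤ 2 * 3 ^ γ * ‖u‖ ^ γ :=
          abs_secondDiff_norm_rpow_le_of_norm_le_two_mul hγ₀ (by linarith)
      _ = _ := by rw [mul_assoc _ (‖u‖ ^ _), ← rpow_add hu₀]; ring_nf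

lemma norm_secondDiff_smul_div_le_splitPow {E : Type*} [NormedAddCommGroup E]
    [InnerProductSpace ℝ E] {γ : ℝ} (hγ₀ : 0 ≤ γ) (hγ₂ : γ ≤ 2) (σ : ℝ) {x v : E} (hx : x ≠ 0)
    (hv : ‖v‖ = 1) (r : ℝ) :
    ‖secondDiff (‖·‖ ^ γ) x (r • v) / |r| ^ (1 + σ)‖ ≤
      splitPow (‖x‖ / 2) (18 * ‖x‖ ^ (γ - 2)) (1 - σ) (2 * 3 ^ γ) (γ - 1 - σ) |r| := by
  have hrv : ‖r • v‖ = |r| := by rw [norm_smul, hv, mul_one, norm_eq_abs]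
  rw [norm_eq_abs, abs_div, abs_of_nonneg (rpow_nonneg (abs_nonneg r) _), ← hrv]
  exact abs_secondDiff_norm_rpow_div_le_splitPow hγ₀ hγ₂ σ hx (r • v)

theorem integral_power_increment_bound_general
    (n : ℕ) (s : ℝ) (hs : s ∈ Set.Ioo (0 : ℝ) 1)
    (μ : Measure (Metric.sphere (0 : EuclideanSpace ℝ (Fin n)) 1)) [IsFiniteMeasure μ]
    (Λ : ℝ) (hΛ : 0 < Λ) (hμΛ : μ Set.univ ≤ ENNReal.ofReal Λ)
    (γ : ℝ) (hγ : γ ∈ Set.Ioo (0 : ℝ) (2 * s)) :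
    ∃ C : ℝ, 0 < C ∧
      ∀ x : EuclideanSpace ℝ (Fin n), 1 ≤ ‖x‖ →
        (∫ p : Metric.sphere (0 : EuclideanSpace ℝ (Fin n)) 1 × ℝ,
            (‖x + p.2 • (p.1 : EuclideanSpace ℝ (Fin n))‖ ^ γ +
              ‖x - p.2 • (p.1 : EuclideanSpace ℝ (Fin n))‖ ^ γ - 2 * ‖x‖ ^ γ) /
              |p.2| ^ (1 + 2 * s) ∂(μ.prod volume))
          ≤ C * ‖x‖ ^ (γ - 2 * s) := by
  obtain ⟨hs₀, hs₁⟩ := hs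
  obtain ⟨hγ₀, hγs⟩ := hγ
  have hp : 0 < 2 - 2 * s := by linarith
  have hq : 0 < 2 * s - γ := by linarith
  set K := 2 * (18 * 2⁻¹ ^ (2 - 2 * s) / (2 - 2 * s) + 2 * 3 ^ γ * 2⁻¹ ^ (γ - 2 * s) / (2 * s - γ))
  refine ⟨Λ * K, by positivity, fun x hx => ?_⟩
  have hx₀ : 0 < ‖x‖ := by linarith
  set g := fun r : ℝ =>
    splitPow (‖x‖ / 2) (18 * ‖x‖ ^ (γ - 2)) (1 - 2 * s) (2 * 3 ^ γ) (γ - 1 - 2 * s) |r|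
  have hg : Integrable g := integrable_splitPow_abs (by positivity) (by linarith) (by linarith)
  calc _ ≤ ∫ p, g p.2 ∂(μ.prod volume) :=
        (le_abs_self _).trans <| norm_integral_le_of_norm_le (hg.comp_snd μ) <| ae_of_all _
          fun p => norm_secondDiff_smul_div_le_splitPow hγ₀.le (by linarith) (2 * s)
            (norm_pos_iff.1 hx₀) (norm_eq_of_mem_sphere p.1) p.2
    _ = μ.real univ * (K * ‖x‖ ^ (γ - 2 * s)) := by
        rw [integral_fun_snd g, integral_splitPow_abs_half hx₀ (by linarith) hγs, smul_eq_mul]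
    _ ≤ Λ * K * ‖x‖ ^ (γ - 2 * s) := by
        rw [← mul_assoc]
        gcongr
        exact ENNReal.toReal_le_of_le_ofReal hΛ.le hμΛ

/-- For `γ ∈ (0,2s)` and `|x| ≥ 1`, one has
`∫_{S^{n-1} × ℝ} (|x+rϑ|^γ + |x−rϑ|^γ − 2|x|^γ) dμ(ϑ) dr / |r|^{1+2s} ≤ C |x|^{γ−2s}`,
with `C` depending only on `n`, `s`, `Λ` and `γ`. -/
theorem integral_power_increment_bound
    (n : ℕ) (hn : 1 ≤ n) (s : ℝ) (hs : s ∈ Set.Ioo (0 : ℝ) 1)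
    (μ : Measure (Metric.sphere (0 : EuclideanSpace ℝ (Fin n)) 1)) [IsFiniteMeasure μ]
    (Λ : ℝ) (hΛ : 0 < Λ) (hμΛ : μ Set.univ ≤ ENNReal.ofReal Λ)
    (γ : ℝ) (hγ : γ ∈ Set.Ioo (0 : ℝ) (2 * s)) :
    ∃ C : ℝ, 0 < C ∧
      ∀ x : EuclideanSpace ℝ (Fin n), 1 ≤ ‖x‖ →
        (∫ p : Metric.sphere (0 : EuclideanSpace ℝ (Fin n)) 1 × ℝ,
            (‖x + p.2 • (p.1 : EuclideanSpace ℝ (Fin n))‖ ^ γ +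
              ‖x - p.2 • (p.1 : EuclideanSpace ℝ (Fin n))‖ ^ γ - 2 * ‖x‖ ^ γ) /
              |p.2| ^ (1 + 2 * s) ∂(μ.prod volume))
          ≤ C * ‖x‖ ^ (γ - 2 * s) :=
  integral_power_increment_bound_general n s hs μ Λ hΛ hμΛ γ hγ
end
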